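/- Let ρ > 0 and define V : M₃(ℝ) → ℝ by V(J) = ½∥J∥² − ρ ln Z(J). Then V is differentiable on M₃(ℝ), and for every J, H ∈ M₃(ℝ) its derivative satisfies DV(J)(H) = (J − ρ 𝒥[M_J]) · H; i.e. the gradient of V with respect to the inner product A·B = ½Tr(ABᵀ) is ∇V(J) = J − ρ 𝒥[M_J]. -/

import Mathlib

open Matrix MeasureTheory

/-- The space of `3 × 3` real matrices. -/
abbrev Mat3 := Matrix (Fin 3) (Fin 3) ℝ

instance : MeasurableSpace Mat3 := inferInstanceAs (MeasurableSpace (Fin 3 → Fin 3 → ℝ))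

attribute [local instance] Matrix.normedAddCommGroup Matrix.normedSpace

/-- `SO₃(ℝ)`: real `3 × 3` matrices with `AᵀA = I₃` and `det A = 1`. -/
def SO3 : Set Mat3 := {A | Aᵀ * A = 1 ∧ A.det = 1}

/-- The inner product `A·B = ½ Tr(ABᵀ)` on `M₃(ℝ)`. -/
noncomputable def mdot (A B : Mat3) : ℝ := (1 / 2) * (A * Bᵀ).trace

/-- `μ` is the Haar probability measure of `SO₃(ℝ)`, viewed as a measure on `M₃(ℝ)`. -/
def IsHaarSO3 (μ : Measure Mat3) : Prop :=
  IsProbabilityMeasure μ ∧ μ SO3ᶜ = 0 ∧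
    ∀ P ∈ SO3, Measure.map (fun A => P * A) μ = μ

/-- The normalization constant `Z(J) = ∫ exp(J·A) dμ(A)`. -/
noncomputable def Z (μ : Measure Mat3) (J : Mat3) : ℝ := ∫ A, Real.exp (mdot J A) ∂μ

/-- The generalized von Mises density `M_J(A) = exp(J·A)/Z(J)`. -/
noncomputable def vonMises (μ : Measure Mat3) (J : Mat3) (A : Mat3) : ℝ :=
  Real.exp (mdot J A) / Z μ J

/-- The first moment `𝒥[f] = ∫ A f(A) dμ(A)`, taken entrywise. -/
noncomputable def Jcal (μ : Measure Mat3) (f : Mat3 → ℝ) : Mat3 :=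
  Matrix.of fun i j => ∫ A, f A * A i j ∂μ

/-- The potential `V(J) = ½∥J∥² − ρ ln Z(J)`. -/
noncomputable def V (μ : Measure Mat3) (ρ : ℝ) (J : Mat3) : ℝ :=
  (1 / 2) * mdot J J - ρ * Real.log (Z μ J)

/-!
`Z` is the Laplace transform of `μ` along the linear forms `H ↦ A·H`. Since `μ` is carried by
`SO₃(ℝ)`, which lies in the unit ball, these forms are uniformly bounded, so `Z` may be
differentiated under the integral sign: `DZ(J)(H) = ∫ e^{J·A} (A·H) dμ = Z(J) (𝒥[M_J]·H)`.
The gradient of `V` then follows from `D(J·J)(H) = 2 J·H` and the chain rule for `log`.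
-/

section LaplaceTransform

variable {α E : Type*} [MeasurableSpace α] [NormedAddCommGroup E] [NormedSpace ℝ E]

theorem hasFDerivAt_integral_exp_of_ae_norm_le {μ : Measure α} [IsFiniteMeasure μ]
    {L : α → StrongDual ℝ E} (hL : AEStronglyMeasurable L μ) {C : ℝ}
    (hC : ∀ᵐ a ∂μ, ‖L a‖ ≤ C) (x₀ : E) :
    HasFDerivAt (fun x => ∫ a, Real.exp (L a x) ∂μ) (∫ a, Real.exp (L a x₀) • L a ∂μ) x₀ := by
  have hmeas : ∀ x, AEStronglyMeasurable (fun a => Real.exp (L a x)) μ := fun x =>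
    Real.continuous_exp.comp_aestronglyMeasurable (hL.apply_continuousLinearMap x)
  have hexp_le : ∀ᵐ a ∂μ, ∀ x : E, ‖x‖ ≤ ‖x₀‖ + 1 →
      Real.exp (L a x) ≤ Real.exp (C * (‖x₀‖ + 1)) := by
    filter_upwards [hC] with a ha x hx
    refine Real.exp_le_exp.mpr ((le_abs_self _).trans ?_)
    calc |L a x| ≤ ‖L a‖ * ‖x‖ := (L a).le_opNorm x
      _ ≤ C * (‖x₀‖ + 1) := mul_le_mul ha hx (norm_nonneg _) ((norm_nonneg _).trans ha)
  refine hasFDerivAt_integral_of_dominated_of_fderiv_le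
    (bound := fun _ => Real.exp (C * (‖x₀‖ + 1)) * C) (Metric.ball_mem_nhds x₀ one_pos)
    (.of_forall hmeas) ?_ ((hmeas x₀).smul hL) ?_ (integrable_const _)
    (.of_forall fun a x _ => ((L a).hasFDerivAt).exp)
  · refine .mono' (integrable_const (Real.exp (C * (‖x₀‖ + 1)))) (hmeas x₀) ?_
    filter_upwards [hexp_le] with a ha
    rw [Real.norm_of_nonneg (Real.exp_pos _).le]
    exact ha x₀ (by linarith)
  · filter_upwards [hexp_le, hC] with a ha hCa x hx
    have hx' : ‖x‖ ≤ ‖x₀‖ + 1 :=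
      (norm_le_norm_add_norm_sub' x x₀).trans (by linarith [mem_ball_iff_norm.mp hx])
    rw [norm_smul, Real.norm_of_nonneg (Real.exp_pos _).le]
    exact mul_le_mul (ha x hx') hCa (norm_nonneg _) (Real.exp_pos _).le

end LaplaceTransform

-- `Mat3` is normed through the local instance `Matrix.normedAddCommGroup`, whose topology is not
-- reducibly the global matrix topology; without preferring it, Bochner integrals and operator
-- norms of `Mat3`-valued maps fail to find their instances.
abbrev Mat3.normTopology : TopologicalSpace Mat3 :=
  (PseudoMetricSpace.toUniformSpace (α := Mat3)).toTopologicalSpace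

section Mat3

attribute [local instance] Mat3.normTopology

instance : BorelSpace Mat3 := inferInstanceAs (BorelSpace (Fin 3 → Fin 3 → ℝ))

theorem mdot_comm (A B : Mat3) : mdot A B = mdot B A := by
  rw [mdot, mdot, ← Matrix.trace_transpose, Matrix.transpose_mul, Matrix.transpose_transpose]

noncomputable def mdotBilin : Mat3 →L[ℝ] Mat3 →L[ℝ] ℝ :=
  LinearMap.toContinuousBilinearMap <| LinearMap.mk₂ ℝ mdot
    (fun A₁ A₂ B => by simp only [mdot, Matrix.add_mul, Matrix.trace_add]; ring)
    (fun c A B => by simp only [mdot, Matrix.smul_mul, Matrix.trace_smul, smul_eq_mul]; ring)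
    (fun A B₁ B₂ => by
      simp only [mdot, Matrix.transpose_add, Matrix.mul_add, Matrix.trace_add]; ring)
    (fun c A B => by
      simp only [mdot, Matrix.transpose_smul, Matrix.mul_smul, Matrix.trace_smul, smul_eq_mul]; ring)

@[simp]
theorem mdotBilin_apply (A B : Mat3) : mdotBilin A B = mdot A B := rfl

theorem continuous_mdot_right (J : Mat3) : Continuous (mdot J) := (mdotBilin J).continuous

theorem hasFDerivAt_mdot_self (J : Mat3) :
    HasFDerivAt (fun J => mdot J J) ((2 : ℝ) • mdotBilin J) J :=
  (mdotBilin.hasFDerivAt.clm_apply (hasFDerivAt_id J)).congr_fderiv <| by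
    ext H
    simp [two_smul, mdot_comm]

theorem norm_le_one_of_mem_SO3 {A : Mat3} (hA : A ∈ SO3) : ‖A‖ ≤ 1 := by
  refine (Matrix.norm_le_iff zero_le_one).mpr fun i j => ?_
  have hcol : ∑ k, A k j ^ 2 = 1 := by
    simpa [Matrix.mul_apply, sq] using congrFun (congrFun hA.1 j) j
  rw [Real.norm_eq_abs, ← sq_le_one_iff_abs_le_one, ← hcol]
  exact Finset.single_le_sum (fun k _ => sq_nonneg (A k j)) (Finset.mem_univ i)

theorem Jcal_eq_integral_smul {μ : Measure Mat3} {f : Mat3 → ℝ}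
    (hf : Integrable (fun A => f A • A) μ) : Jcal μ f = ∫ A, f A • A ∂μ := by
  ext i j
  have hrow := eval_integral (f := fun A => (f A • A : Fin 3 → Fin 3 → ℝ)) hf.eval i
  have hentry := eval_integral (f := fun A => (f A • A : Fin 3 → Fin 3 → ℝ) i) (hf.eval i).eval j
  exact hentry.symm.trans (congrFun hrow j).symm

section Haar

variable {μ : Measure Mat3}

theorem IsHaarSO3.ae_norm_le_one (hμ : IsHaarSO3 μ) : ∀ᵐ A ∂μ, ‖A‖ ≤ 1 :=
  (ae_iff.mpr hμ.2.1).mono fun _ => norm_le_one_of_mem_SO3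

theorem IsHaarSO3.integrable_of_continuous (hμ : IsHaarSO3 μ) {E : Type*}
    [NormedAddCommGroup E] {g : Mat3 → E} (hg : Continuous g) : Integrable g μ := by
  have := hμ.1
  have hball : ∀ᵐ A ∂μ, A ∈ Metric.closedBall (0 : Mat3) 1 :=
    hμ.ae_norm_le_one.mono fun A hA => mem_closedBall_zero_iff.mpr hA
  have hball_integrable : IntegrableOn g (Metric.closedBall 0 1) μ :=
    hg.continuousOn.integrableOn_compact (isCompact_closedBall 0 1)
  rwa [IntegrableOn, Measure.restrict_eq_self_of_ae_mem hball] at hball_integrable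

theorem Z_pos (hμ : IsHaarSO3 μ) (J : Mat3) : 0 < Z μ J :=
  have := hμ.1
  integral_exp_pos (hμ.integrable_of_continuous (continuous_mdot_right J).rexp)

theorem Z_smul_Jcal_vonMises (hμ : IsHaarSO3 μ) (J : Mat3) :
    Z μ J • Jcal μ (vonMises μ J) = ∫ A, Real.exp (mdot J A) • A ∂μ := by
  rw [Jcal_eq_integral_smul (f := vonMises μ J) (hμ.integrable_of_continuous
    (((continuous_mdot_right J).rexp.div_const _).smul continuous_id)), ← integral_smul]
  congr 1 with A
  rw [smul_smul, vonMises, mul_div_cancel₀ _ (Z_pos hμ J).ne']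

theorem hasFDerivAt_Z (hμ : IsHaarSO3 μ) (J : Mat3) :
    HasFDerivAt (Z μ) (mdotBilin (Z μ J • Jcal μ (vonMises μ J))) J := by
  have := hμ.1
  have hbound : ∀ᵐ A ∂μ, ‖mdotBilin A‖ ≤ ‖mdotBilin‖ := hμ.ae_norm_le_one.mono fun A hA =>
    (mdotBilin.le_opNorm A).trans (mul_le_of_le_one_right (norm_nonneg _) hA)
  have hderiv := hasFDerivAt_integral_exp_of_ae_norm_le
    mdotBilin.continuous.aestronglyMeasurable hbound J
  have hZ : (fun x => ∫ A, Real.exp (mdotBilin A x) ∂μ) = Z μ := by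
    ext x; simp only [Z, mdotBilin_apply, mdot_comm x]
  have hZ' : ∫ A, Real.exp (mdotBilin A J) • mdotBilin A ∂μ =
      mdotBilin (Z μ J • Jcal μ (vonMises μ J)) := by
    rw [Z_smul_Jcal_vonMises hμ, ← ContinuousLinearMap.integral_comp_comm]
    · simp only [map_smul, mdotBilin_apply, mdot_comm J]
    · exact hμ.integrable_of_continuous ((continuous_mdot_right J).rexp.smul continuous_id)
  rwa [hZ, hZ'] at hderiv

theorem hasFDerivAt_V (hμ : IsHaarSO3 μ) (ρ : ℝ) (J : Mat3) :
    HasFDerivAt (V μ ρ) (mdotBilin (J - ρ • Jcal μ (vonMises μ J))) J :=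
  (((hasFDerivAt_mdot_self J).const_mul (1 / 2)).sub
    (((hasFDerivAt_Z hμ J).log (Z_pos hμ J).ne').const_mul ρ)).congr_fderiv <| by
    rw [map_smul, smul_smul, smul_smul, smul_smul, mul_assoc ρ, inv_mul_cancel₀ (Z_pos hμ J).ne',
      map_sub, map_smul]
    norm_num

end Haar

end Mat3

theorem V_differentiable_gradient (μ : Measure Mat3) (hμ : IsHaarSO3 μ)
    (ρ : ℝ) :
    Differentiable ℝ (V μ ρ) ∧
    ∀ J H : Mat3, fderiv ℝ (V μ ρ) J H = mdot (J - ρ • Jcal μ (vonMises μ J)) H :=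
  ⟨fun J => (hasFDerivAt_V hμ ρ J).differentiableAt, fun J H =>
    ContinuousLinearMap.ext_iff.mp (hasFDerivAt_V hμ ρ J).fderiv H⟩
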